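/- arXiv:2404.08898 — 3 statements merged into one kernel-verified Lean document; each statement's English description precedes it below -/
import Mathlib

section
/- The ejMCMC chain with joint target density π̂_ε(θ,x|y) proportional to π(θ)p(x|θ)·min{K_ε(Δ(x,y)), K_ε(h(θ))}, proposal q(θ*|θ)p(x*|θ*), and acceptance probability α̂[(θ,x),(θ*,x*)] = min{1, (π(θ*)q(θ|θ*)/(π(θ)q(θ*|θ))) · min{K_ε(Δ(x*,y)),K_ε(h(θ*))}/min{K_ε(Δ(x,y)),K_ε(h(θ))}} satisfies detailed balance: π̂_ε(θ,x|y)q(θ*|θ)p(x*|θ*)α̂[(θ,x),(θ*,x*)] = π̂_ε(θ*,x*|y)q(θ|θ*)p(x|θ)α̂[(θ*,x*),(θ,x)]. -/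
lemma mul_min_one_div {A B : ℝ} (hA : 0 < A) : A * min 1 (B / A) = min A B := by
  rw [mul_min_of_nonneg _ _ hA.le, mul_one, mul_div_cancel₀ _ hA.ne']

/-- The ejMCMC chain with joint target
π̂_ε(θ,x) ∝ π(θ)p(x|θ)min{K_ε(Δ(x,y)), K_ε(h(θ))}, proposal q(θ*|θ)p(x*|θ*) and
pseudo acceptance probability α̂ satisfies detailed balance. -/
theorem ejMCMC_detailed_balance {Θ X : Type*}
    (π : Θ → ℝ) (p : Θ → X → ℝ) (q : Θ → Θ → ℝ)
    (Kε : ℝ → ℝ) (Δ : X → ℝ) (h : Θ → ℝ)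
    (Z : ℝ) (hZ : 0 < Z)
    (πhat : Θ → X → ℝ)
    (hπhat : ∀ θ x, πhat θ x = π θ * p θ x * min (Kε (Δ x)) (Kε (h θ)) / Z)
    (αhat : Θ → X → Θ → X → ℝ)
    (hαhat : ∀ θ x θs xs, αhat θ x θs xs =
      min 1 (π θs * q θs θ / (π θ * q θ θs) *
        (min (Kε (Δ xs)) (Kε (h θs)) / min (Kε (Δ x)) (Kε (h θ)))))
    (θ θs : Θ) (x xs : X)
    (hpos : 0 < π θ * q θ θs) (hpos' : 0 < π θs * q θs θ)
    (hp : 0 < p θ x) (hp' : 0 < p θs xs)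
    (hK : 0 < min (Kε (Δ x)) (Kε (h θ)))
    (hK' : 0 < min (Kε (Δ xs)) (Kε (h θs))) :
    πhat θ x * (q θ θs * p θs xs) * αhat θ x θs xs
      = πhat θs xs * (q θs θ * p θ x) * αhat θs xs θ x := by
  set Mx := min (Kε (Δ x)) (Kε (h θ)) with hMx
  set Ms := min (Kε (Δ xs)) (Kε (h θs)) with hMs
  have hA : 0 < π θ * q θ θs * Mx := mul_pos hpos hK
  have hB : 0 < π θs * q θs θ * Ms := mul_pos hpos' hK'
  have e1 : π θs * q θs θ / (π θ * q θ θs) * (Ms / Mx)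
      = (π θs * q θs θ * Ms) / (π θ * q θ θs * Mx) := by
    field_simp
  have e2 : π θ * q θ θs / (π θs * q θs θ) * (Mx / Ms)
      = (π θ * q θ θs * Mx) / (π θs * q θs θ * Ms) := by
    field_simp
  rw [hπhat, hπhat, hαhat, hαhat, ← hMx, ← hMs, e1, e2]
  have key1 := mul_min_one_div (B := π θs * q θs θ * Ms) hA
  have key2 := mul_min_one_div (B := π θ * q θ θs * Mx) hB
  calc π θ * p θ x * Mx / Z * (q θ θs * p θs xs)
        * min 1 (π θs * q θs θ * Ms / (π θ * q θ θs * Mx))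
      = (p θ x * p θs xs / Z) *
        (π θ * q θ θs * Mx * min 1 (π θs * q θs θ * Ms / (π θ * q θ θs * Mx))) := by
        ring
    _ = (p θ x * p θs xs / Z) * min (π θ * q θ θs * Mx) (π θs * q θs θ * Ms) := by
        rw [key1]
    _ = (p θ x * p θs xs / Z) *
        (π θs * q θs θ * Ms * min 1 (π θ * q θ θs * Mx / (π θs * q θs θ * Ms))) := by
        rw [key2, min_comm]
    _ = π θs * p θs xs * Ms / Z * (q θs θ * p θ x)
        * min 1 (π θ * q θ θs * Mx / (π θs * q θs θ * Ms)) := by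
        ring
end

section
/- If the uniform-kernel case holds and the set Θ₁ \ Θ' = {θ : π_ε(θ|y) > 0} \ {θ : h(θ) ≤ ε} has Lebesgue measure zero, then the ejMCMC posterior π̂_ε(·|y) equals the standard ABC posterior π_ε(·|y) almost everywhere. -/
open MeasureTheory

/-! Off the null set `{π_ε > 0} \ Θ'` the indicator of `Θ'` does not change `π · I`: either
`h θ ≤ ε`, or `π θ I θ = 0`. Hence the two unnormalized posteriors agree a.e., so do their
normalizing constants, and so do the normalized densities. -/

theorem mul_ite_ae_eq_of_measure_pos_diff_eq_zero {Θ : Type*} [MeasurableSpace Θ]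
    {μ : Measure Θ} {f : Θ → ℝ} (hf : ∀ θ, 0 ≤ f θ) {p : Θ → Prop} [DecidablePred p]
    (hnull : μ ({θ | 0 < f θ} \ {θ | p θ}) = 0) :
    (fun θ => f θ * if p θ then (1 : ℝ) else 0) =ᵐ[μ] f := by
  filter_upwards [measure_eq_zero_iff_ae_notMem.mp hnull] with θ hθ
  by_cases hp : p θ
  · simp [hp]
  · have hzero : f θ = 0 := le_antisymm (not_lt.mp fun hpos => hθ ⟨hpos, hp⟩) (hf θ)
    simp [hzero]

theorem setOf_pos_div_eq {Θ : Type*} (f : Θ → ℝ) {c : ℝ} (hc : 0 < c) :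
    {θ | 0 < f θ / c} = {θ | 0 < f θ} :=
  Set.ext fun _ => div_pos_iff_of_pos_right hc

theorem ejMCMC_posterior_ae_eq_ABC_posterior_general {Θ : Type*} [MeasurableSpace Θ]
    (μ : Measure Θ)
    (π I : Θ → ℝ)            -- I θ = ∫ p(x|θ)1{Δ(x,y) ≤ ε} dx
    (h : Θ → ℝ) (ε : ℝ)
    (hπ : ∀ θ, 0 ≤ π θ) (hI : ∀ θ, 0 ≤ I θ)
    (Z1 Z2 : ℝ)
    (hZ1 : Z1 = ∫ θ, π θ * I θ ∂μ) (hZ1pos : 0 < Z1)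
    (hZ2 : Z2 = ∫ θ, π θ * I θ * (if h θ ≤ ε then (1 : ℝ) else 0) ∂μ)
    (πABC πhat : Θ → ℝ)
    (hπABC : ∀ θ, πABC θ = π θ * I θ / Z1)
    (hπhat : ∀ θ, πhat θ = π θ * I θ * (if h θ ≤ ε then (1 : ℝ) else 0) / Z2)
    (hnull : μ ({θ | 0 < πABC θ} \ {θ | h θ ≤ ε}) = 0) :
    ∀ᵐ θ ∂μ, πhat θ = πABC θ := by
  have hsupp : {θ | 0 < πABC θ} = {θ | 0 < π θ * I θ} := by
    simp only [hπABC, setOf_pos_div_eq (fun θ => π θ * I θ) hZ1pos]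
  have hunnormalized := mul_ite_ae_eq_of_measure_pos_diff_eq_zero
    (fun θ => mul_nonneg (hπ θ) (hI θ)) (hsupp ▸ hnull)
  have hZ : Z2 = Z1 := by rw [hZ2, hZ1, integral_congr_ae hunnormalized]
  filter_upwards [hunnormalized] with θ hθ
  rw [hπhat, hπABC, hθ, hZ]

/-- In the uniform-kernel case, if Θ₁ \ Θ' = {π_ε(·|y) > 0} \ {h ≤ ε}
has measure zero, then the ejMCMC posterior equals the ABC posterior almost
everywhere. -/
theorem ejMCMC_posterior_ae_eq_ABC_posterior {Θ : Type*} [MeasurableSpace Θ]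
    (μ : Measure Θ)
    (π I : Θ → ℝ)            -- I θ = ∫ p(x|θ)1{Δ(x,y) ≤ ε} dx
    (h : Θ → ℝ) (ε : ℝ)
    (hπ : ∀ θ, 0 ≤ π θ) (hI : ∀ θ, 0 ≤ I θ)
    (Z1 Z2 : ℝ)
    (hZ1 : Z1 = ∫ θ, π θ * I θ ∂μ) (hZ1pos : 0 < Z1)
    (hZ2 : Z2 = ∫ θ, π θ * I θ * (if h θ ≤ ε then (1 : ℝ) else 0) ∂μ)
    (hZ2pos : 0 < Z2)
    (πABC πhat : Θ → ℝ)
    (hπABC : ∀ θ, πABC θ = π θ * I θ / Z1)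
    (hπhat : ∀ θ, πhat θ = π θ * I θ * (if h θ ≤ ε then (1 : ℝ) else 0) / Z2)
    (hnull : μ ({θ | 0 < πABC θ} \ {θ | h θ ≤ ε}) = 0)
    (hint : Integrable (fun θ => π θ * I θ) μ) :
    ∀ᵐ θ ∂μ, πhat θ = πABC θ :=
  ejMCMC_posterior_ae_eq_ABC_posterior_general μ π I h ε hπ hI Z1 Z2 hZ1 hZ1pos hZ2 πABC πhat hπABC
    hπhat hnull
end

section
/- Let g, f be probability densities with g ∝ G and f ∝ F pointwise, where 0 ≤ G(θ) ≤ F(θ) for all θ and ∫(F − G) ≤ a·∫F for some a ∈ [0,1). Then the L¹ distance satisfies ∫|g − f| dθ ≤ 2a/(1−a), which tends to 0 as a → 0. -/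
open MeasureTheory

/-!
Write `g - f = G (1/∫G - 1/∫F) - (F - G)/∫F`. Both terms are nonnegative, so integrating their
sum bounds `∫|g - f|` by `2 (∫F - ∫G)/∫F ≤ 2a`, which is at most `2a/(1 - a)`.
-/

lemma abs_div_sub_div_le_of_le {x y p q : ℝ} (hx : 0 ≤ x) (hxy : x ≤ y) (hp : 0 < p)
    (hpq : p ≤ q) : |x / p - y / q| ≤ x * (1 / p - 1 / q) + (y - x) / q := by
  have hq : 0 < q := hp.trans_le hpq
  have hcoef : 0 ≤ 1 / p - 1 / q := sub_nonneg.mpr (one_div_le_one_div_of_le hp hpq)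
  calc |x / p - y / q| = |x * (1 / p - 1 / q) - (y - x) / q| := by
        congr 1; field_simp; ring
    _ ≤ |x * (1 / p - 1 / q)| + |(y - x) / q| := abs_sub _ _
    _ = x * (1 / p - 1 / q) + (y - x) / q := by
        rw [abs_of_nonneg (mul_nonneg hx hcoef),
          abs_of_nonneg (div_nonneg (sub_nonneg.mpr hxy) hq.le)]

theorem integral_abs_normalize_sub_normalize_le {Θ : Type*} [MeasurableSpace Θ]
    {μ : Measure Θ} {F G : Θ → ℝ} (hFint : Integrable F μ) (hGint : Integrable G μ)
    (hG0 : 0 ≤ᵐ[μ] G) (hGF : G ≤ᵐ[μ] F) (hGpos : 0 < ∫ θ, G θ ∂μ) :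
    ∫ θ, |G θ / ∫ t, G t ∂μ - F θ / ∫ t, F t ∂μ| ∂μ
      ≤ 2 * (1 - (∫ θ, G θ ∂μ) / ∫ θ, F θ ∂μ) := by
  set IF := ∫ θ, F θ ∂μ
  set IG := ∫ θ, G θ ∂μ
  have hIGF : IG ≤ IF := integral_mono_ae hGint hFint hGF
  have hsub_int : Integrable (fun θ ↦ F θ - G θ) μ := hFint.sub hGint
  have hbound_int : Integrable (fun θ ↦ G θ * (1 / IG - 1 / IF) + (F θ - G θ) / IF) μ :=
    (hGint.mul_const _).add (hsub_int.div_const _)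
  calc ∫ θ, |G θ / IG - F θ / IF| ∂μ
      ≤ ∫ θ, (G θ * (1 / IG - 1 / IF) + (F θ - G θ) / IF) ∂μ := by
        refine integral_mono_ae ((hGint.div_const _).sub (hFint.div_const _)).abs hbound_int ?_
        filter_upwards [hG0, hGF] with θ hθ0 hθF
        exact abs_div_sub_div_le_of_le hθ0 hθF hGpos hIGF
    _ = IG * (1 / IG - 1 / IF) + (IF - IG) / IF := by
        rw [integral_add (hGint.mul_const _) (hsub_int.div_const _),
          integral_mul_const, integral_div, integral_sub hFint hGint]
    _ = 2 * (1 - IG / IF) := by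
        field_simp [hGpos.ne', (hGpos.trans_le hIGF).ne']
        ring

/-- If g ∝ G and f ∝ F with 0 ≤ G ≤ F pointwise and
∫(F − G) ≤ a·∫F with a ∈ [0,1), then ∫|g − f| ≤ 2a/(1−a). -/
theorem L1_distance_of_normalized_densities {Θ : Type*} [MeasurableSpace Θ]
    (μ : Measure Θ) (F G : Θ → ℝ) (a : ℝ)
    (ha0 : 0 ≤ a) (ha1 : a < 1)
    (hG0 : ∀ θ, 0 ≤ G θ) (hGF : ∀ θ, G θ ≤ F θ)
    (hFint : Integrable F μ) (hGint : Integrable G μ)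
    (hFpos : 0 < ∫ θ, F θ ∂μ) (hGpos : 0 < ∫ θ, G θ ∂μ)
    (hdiff : ∫ θ, (F θ - G θ) ∂μ ≤ a * ∫ θ, F θ ∂μ)
    (f g : Θ → ℝ)
    (hf : ∀ θ, f θ = F θ / ∫ t, F t ∂μ)
    (hg : ∀ θ, g θ = G θ / ∫ t, G t ∂μ) :
    ∫ θ, |g θ - f θ| ∂μ ≤ 2 * a / (1 - a) := by
  simp_rw [hf, hg]
  have hratio : 1 - (∫ θ, G θ ∂μ) / ∫ θ, F θ ∂μ ≤ a := by
    rw [integral_sub hFint hGint] at hdiff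
    rw [one_sub_div hFpos.ne', div_le_iff₀ hFpos]
    exact hdiff
  calc _ ≤ 2 * (1 - (∫ θ, G θ ∂μ) / ∫ θ, F θ ∂μ) :=
        integral_abs_normalize_sub_normalize_le hFint hGint (.of_forall hG0) (.of_forall hGF) hGpos
    _ ≤ 2 * a := by gcongr
    _ ≤ 2 * a / (1 - a) := le_div_self (by positivity) (by linarith) (by linarith)
end
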